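/- arXiv:1711.01426 — 3 statements merged into one kernel-verified Lean document; each statement's English description precedes it below -/
import Mathlib

section
/- If X_i, i ∈ I, are pairwise disjoint and connected binary structures, then ⋃_{i∈I} X_i is reversible if and only if ⋃_{i∈J} X_i is reversible for every non-empty set J ⊆ I. Consequently, if ⋃_{i∈I} X_i is reversible, then every component X_i, i ∈ I, is reversible. -/
universe u v w

section Defs

variable {α : Type*} {β : Type*}

/-- `f` is a homomorphism from `⟨α, r⟩` to `⟨β, s⟩`. -/
def IsHom (r : α → α → Prop) (s : β → β → Prop) (f : α → β) : Prop :=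
  ∀ x y, r x y → s (f x) (f y)

/-- A condensation is a bijective homomorphism. -/
def IsCond (r : α → α → Prop) (s : β → β → Prop) (f : α → β) : Prop :=
  Function.Bijective f ∧ IsHom r s f

/-- A monomorphism is an injective homomorphism. -/
def IsMono (r : α → α → Prop) (s : β → β → Prop) (f : α → β) : Prop :=
  Function.Injective f ∧ IsHom r s f

/-- An isomorphism of binary structures. -/
def IsIso (r : α → α → Prop) (s : β → β → Prop) (f : α → β) : Prop :=
  Function.Bijective f ∧ ∀ x y, r x y ↔ s (f x) (f y)

/-- A binary structure is reversible iff every self-condensation is an automorphism. -/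
def Reversible (r : α → α → Prop) : Prop :=
  ∀ f : α → α, IsCond r r f → IsIso r r f

/-- A binary structure is connected iff it has exactly one component: it is nonempty and
the least equivalence relation containing `r` relates any two points. -/
def Connected (r : α → α → Prop) : Prop :=
  Nonempty α ∧ ∀ x y, Relation.EqvGen r x y

/-- The relation of the disjoint union of the structures `⟨X i, R i⟩`. -/
def unionRel {I : Type*} {X : I → Type*} (R : ∀ i, X i → X i → Prop) :
    (Σ i, X i) → (Σ i, X i) → Prop :=
  fun a b => ∃ h : a.1 = b.1, R b.1 (h ▸ a.2) b.2

end Defs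

/-!
Extending a self-condensation of a union of components by the identity on the remaining
components gives a self-condensation of the whole structure; if the whole structure is
reversible this extension is an automorphism, and so is its restriction. Hence reversibility
passes to every union of components, in particular to each component, while the whole union
is the subunion indexed by `J = I`.
-/

open Equiv

section Reversible

variable {α β : Type*} {r : α → α → Prop} {s : β → β → Prop}

theorem Reversible.of_relIso (e : r ≃r s) (hs : Reversible s) : Reversible r := by
  intro f hf
  have hcond : IsCond s s (e ∘ f ∘ e.symm) := by
    refine ⟨(e.bijective.comp hf.1).comp e.symm.bijective, fun x y hxy => ?_⟩
    exact e.map_rel_iff.2 (hf.2 _ _ (e.symm.map_rel_iff.2 hxy))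
  refine ⟨hf.1, fun x y => ?_⟩
  simpa only [Function.comp_apply, RelIso.symm_apply_apply, e.map_rel_iff] using
    (hs _ hcond).2 (e x) (e y)

theorem RelIso.reversible_iff (e : r ≃r s) : Reversible r ↔ Reversible s :=
  ⟨Reversible.of_relIso e.symm, Reversible.of_relIso e⟩

theorem Reversible.of_isEmpty [IsEmpty α] : Reversible r :=
  fun _ hf => ⟨hf.1, fun x => isEmptyElim x⟩

theorem Reversible.subrel (hr : Reversible r) {p : α → Prop}
    (hp : ∀ x y, r x y → (p x ↔ p y)) : Reversible (Subrel r p) := by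
  classical
  intro g hg
  let σ : Perm α := Perm.ofSubtype (Equiv.ofBijective g hg.1)
  have hσ : IsHom r r σ := by
    intro x y hxy
    by_cases hx : p x
    · have hy : p y := (hp x y hxy).1 hx
      rw [Perm.ofSubtype_apply_of_mem _ hx, Perm.ofSubtype_apply_of_mem _ hy]
      exact hg.2 ⟨x, hx⟩ ⟨y, hy⟩ hxy
    · have hy : ¬p y := fun hy => hx ((hp x y hxy).2 hy)
      rwa [Perm.ofSubtype_apply_of_not_mem _ hx, Perm.ofSubtype_apply_of_not_mem _ hy]
  refine ⟨hg.1, fun x y => ?_⟩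
  simpa only [subrel_val, σ, Perm.ofSubtype_apply_coe, Equiv.ofBijective_apply] using
    (hr σ ⟨σ.bijective, hσ⟩).2 x y

end Reversible

section unionRel

variable {I : Type*} {X : I → Type*} (R : ∀ i, X i → X i → Prop)

variable {R} in
theorem unionRel.fst_eq {a b : Σ i, X i} (h : unionRel R a b) : a.1 = b.1 :=
  h.1

variable {R} in
@[simp]
theorem unionRel_mk_mk {i : I} {x y : X i} : unionRel R ⟨i, x⟩ ⟨i, y⟩ ↔ R i x y :=
  ⟨fun ⟨_, h⟩ => h, fun h => ⟨rfl, h⟩⟩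

def unionRel.subrelFstMemIso (J : Set I) :
    Subrel (unionRel R) (fun a => a.1 ∈ J) ≃r unionRel (fun j : J => R j.1) where
  toEquiv := subtypeSigmaEquiv X (· ∈ J)
  map_rel_iff' {a b} := by
    obtain ⟨⟨i, x⟩, hi⟩ := a
    obtain ⟨⟨j, y⟩, hj⟩ := b
    by_cases hij : i = j
    · subst hij
      exact unionRel_mk_mk.trans unionRel_mk_mk.symm
    · exact iff_of_false (fun h => hij (congrArg Subtype.val h.fst_eq)) fun h => hij h.fst_eq

def unionRel.subrelFstEqIso (i : I) : Subrel (unionRel R) (fun a => a.1 = i) ≃r R i where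
  toEquiv := sigmaSubtype i
  map_rel_iff' {a b} := by
    obtain ⟨⟨j, x⟩, rfl : j = i⟩ := a
    obtain ⟨⟨k, y⟩, rfl : k = j⟩ := b
    exact unionRel_mk_mk.symm

def unionRel.univIso : unionRel R ≃r unionRel (fun j : (Set.univ : Set I) => R j.1) :=
  (RelIso.subrelUnivIso fun _ => Set.mem_univ _).symm.trans (unionRel.subrelFstMemIso R _)

theorem Reversible.unionRel_subtype (hR : Reversible (unionRel R)) (J : Set I) :
    Reversible (unionRel fun j : J => R j.1) :=
  (unionRel.subrelFstMemIso R J).reversible_iff.1 <|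
    hR.subrel fun _ _ h => by rw [h.fst_eq]

theorem Reversible.of_unionRel (hR : Reversible (unionRel R)) (i : I) : Reversible (R i) :=
  (unionRel.subrelFstEqIso R i).reversible_iff.1 <| hR.subrel fun _ _ h => by rw [h.fst_eq]

end unionRel

theorem stmt1_general {I : Type u} {X : I → Type v} (R : ∀ i, X i → X i → Prop) :
    (Reversible (unionRel R) ↔
        ∀ J : Set I, J.Nonempty → Reversible (unionRel (fun j : J => R j.1))) ∧
    (Reversible (unionRel R) → ∀ i : I, Reversible (R i)) := by
  refine ⟨⟨fun hR J _ => hR.unionRel_subtype R J, fun hJ => ?_⟩, Reversible.of_unionRel R⟩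
  cases isEmpty_or_nonempty I with
  | inl _ => exact Reversible.of_isEmpty
  | inr hI =>
    obtain ⟨i⟩ := hI
    exact (unionRel.univIso R).reversible_iff.2 (hJ Set.univ ⟨i, trivial⟩)

/-- **Theorem (Statement 1).** If `⟨X i, R i⟩`, `i ∈ I`, are pairwise disjoint (realized by a
sigma type) connected binary structures, then the disjoint union `⋃_{i∈I} X i` is reversible iff
`⋃_{i∈J} X i` is reversible for every non-empty `J ⊆ I`; consequently, if `⋃_{i∈I} X i` is
reversible, then every component `X i` is reversible. -/
theorem stmt1 {I : Type u} {X : I → Type v} (R : ∀ i, X i → X i → Prop)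
    (hconn : ∀ i, Connected (R i)) :
    (Reversible (unionRel R) ↔
        ∀ J : Set I, J.Nonempty → Reversible (unionRel (fun j : J => R j.1))) ∧
    (Reversible (unionRel R) → ∀ i : I, Reversible (R i)) :=
  stmt1_general R
end

section
/- Let X_i, i ∈ I, be pairwise disjoint and connected binary structures. Then ⋃_{i∈I} X_i is reversible if and only if the following holds: whenever f : I → I is a surjection, g_i is a monomorphism from X_i to X_{f(i)} for each i ∈ I, and for each j ∈ I the family {g_i[X_i] : i ∈ f⁻¹[{j}]} is a partition of X_j, then f is a bijection and each g_i is an isomorphism from X_i onto X_{f(i)}. -/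
/-!
A homomorphism preserves components, so a self-condensation `F` of a disjoint union of
connected structures maps each summand into a single summand: `F ⟨i, x⟩ = ⟨f i, g i x⟩`.
Such an `F` is a condensation exactly when the `g i` are monomorphisms whose ranges, for
`i ∈ f⁻¹[{j}]`, partition `X j`, and it is an automorphism exactly when moreover `f` is a
bijection and every `g i` is an isomorphism. Injectivity of `f` is forced once `F` is an
automorphism: the inverse of `F` is a homomorphism as well, so it maps the connected `X j`
into a single summand.
-/

universe u v w

open Function

theorem IsHom.eqvGen {α β : Type*} {r : α → α → Prop} {s : β → β → Prop} {f : α → β}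
    (hf : IsHom r s f) {x y : α} (h : Relation.EqvGen r x y) :
    Relation.EqvGen s (f x) (f y) := by
  induction h with
  | rel a b h => exact .rel _ _ (hf a b h)
  | refl => exact .refl _
  | symm _ _ _ ih => exact .symm _ _ ih
  | trans _ _ _ _ _ ih₁ ih₂ => exact .trans _ _ _ ih₁ ih₂

theorem IsIso.isHom_surjInv {α β : Type*} {r : α → α → Prop} {s : β → β → Prop} {f : α → β}
    (hf : IsIso r s f) : IsHom s r (surjInv hf.1.2) := by
  intro x y hxy
  rw [hf.2, rightInverse_surjInv hf.1.2 x, rightInverse_surjInv hf.1.2 y]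
  exact hxy

section UnionRel

variable {I J : Type*} {X : I → Type*} {Y : J → Type*}

theorem sigma_mk_eq_mk_iff {i j : I} (h : i = j) (x : X i) (y : X j) :
    (⟨i, x⟩ : Σ k, X k) = ⟨j, y⟩ ↔ h ▸ x = y := by
  subst h
  simp

theorem unionRel_mk_mk_iff (R : ∀ i, X i → X i → Prop) (i : I) (x y : X i) :
    unionRel R ⟨i, x⟩ ⟨i, y⟩ ↔ R i x y :=
  ⟨fun ⟨_, h⟩ => h, fun h => ⟨rfl, h⟩⟩

theorem Relation.EqvGen.fst_eq_of_unionRel {R : ∀ i, X i → X i → Prop} {a b : Σ i, X i}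
    (h : Relation.EqvGen (unionRel R) a b) : a.1 = b.1 := by
  induction h with
  | rel a b h => exact h.1
  | refl => rfl
  | symm _ _ _ ih => exact ih.symm
  | trans _ _ _ _ _ ih₁ ih₂ => exact ih₁.trans ih₂

theorem fst_eq_of_isHom_unionRel {R : ∀ i, X i → X i → Prop} {S : ∀ j, Y j → Y j → Prop}
    (hconn : ∀ i, Connected (R i)) {φ : (Σ i, X i) → Σ j, Y j}
    (hφ : IsHom (unionRel R) (unionRel S) φ) {a b : Σ i, X i} (h : a.1 = b.1) :
    (φ a).1 = (φ b).1 := by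
  obtain ⟨i, x⟩ := a
  obtain ⟨i', y⟩ := b
  obtain rfl : i = i' := h
  have hmk : IsHom (R i) (unionRel R) (Sigma.mk i) := fun x y h => ⟨rfl, h⟩
  exact (hφ.eqvGen (hmk.eqvGen ((hconn i).2 x y))).fst_eq_of_unionRel

end UnionRel

section SigmaMap

variable {I J : Type*} {X : I → Type*} {Y : J → Type*}

def RangesPairwiseDisjoint (f : I → J) (g : ∀ i, X i → Y (f i)) : Prop :=
  ∀ (j : J) (i₁ i₂ : I) (h₁ : f i₁ = j) (h₂ : f i₂ = j) (x₁ : X i₁) (x₂ : X i₂),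
    h₁ ▸ g i₁ x₁ = h₂ ▸ g i₂ x₂ → i₁ = i₂

def RangesCover (f : I → J) (g : ∀ i, X i → Y (f i)) : Prop :=
  ∀ (j : J) (y : Y j), ∃ (i : I) (h : f i = j) (x : X i), h ▸ g i x = y

variable {f : I → J} {g : ∀ i, X i → Y (f i)}

theorem injective_sigmaMap_iff :
    Injective (Sigma.map f g) ↔ RangesPairwiseDisjoint f g ∧ ∀ i, Injective (g i) := by
  refine ⟨fun h => ⟨?_, h.of_sigma_map⟩, ?_⟩
  · intro j i₁ i₂ h₁ h₂ x₁ x₂ he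
    have : Sigma.map f g ⟨i₁, x₁⟩ = Sigma.map f g ⟨i₂, x₂⟩ :=
      ((sigma_mk_eq_mk_iff h₁ _ _).2 rfl).trans ((sigma_mk_eq_mk_iff h₂ _ _).2 he.symm).symm
    exact congrArg Sigma.fst (h this)
  · rintro ⟨hdisj, hg⟩ ⟨i₁, x₁⟩ ⟨i₂, x₂⟩ he
    have hf : f i₁ = f i₂ := congrArg Sigma.fst he
    have he' : hf ▸ g i₁ x₁ = g i₂ x₂ := (sigma_mk_eq_mk_iff hf _ _).1 he
    obtain rfl : i₁ = i₂ := hdisj _ i₁ i₂ hf rfl x₁ x₂ he'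
    rw [hg i₁ he']

theorem surjective_sigmaMap_iff : Surjective (Sigma.map f g) ↔ RangesCover f g := by
  constructor
  · intro h j y
    obtain ⟨⟨i, x⟩, hx⟩ := h ⟨j, y⟩
    have hf : f i = j := congrArg Sigma.fst hx
    exact ⟨i, hf, x, (sigma_mk_eq_mk_iff hf _ _).1 hx⟩
  · rintro h ⟨j, y⟩
    obtain ⟨i, hf, x, hx⟩ := h j y
    exact ⟨⟨i, x⟩, (sigma_mk_eq_mk_iff hf _ _).2 hx⟩

theorem Function.Surjective.of_sigma_map_left (hY : ∀ j, Nonempty (Y j))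
    (h : Surjective (Sigma.map f g)) : Surjective f := by
  intro j
  obtain ⟨y⟩ := hY j
  obtain ⟨a, ha⟩ := h ⟨j, y⟩
  exact ⟨a.1, congrArg Sigma.fst ha⟩

theorem Function.Surjective.of_sigma_map (h : Surjective (Sigma.map f g)) (hf : Injective f)
    (i : I) : Surjective (g i) := by
  intro y
  obtain ⟨i', hi', x, hx⟩ := surjective_sigmaMap_iff.1 h (f i) y
  obtain rfl : i' = i := hf hi'
  exact ⟨x, hx⟩

theorem exists_sigmaMap_eq (hX : ∀ i, Nonempty (X i)) (F : (Σ i, X i) → Σ j, Y j)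
    (hF : ∀ a b : Σ i, X i, a.1 = b.1 → (F a).1 = (F b).1) :
    ∃ (f : I → J) (g : ∀ i, X i → Y (f i)), F = Sigma.map f g := by
  let f i := (F ⟨i, (hX i).some⟩).1
  have hfst : ∀ i x, (F ⟨i, x⟩).1 = f i := fun i x => hF _ _ rfl
  refine ⟨f, fun i x => cast (congrArg Y (hfst i x)) (F ⟨i, x⟩).2, funext fun a => ?_⟩
  exact Sigma.ext (hfst a.1 a.2) (cast_heq _ _).symm

variable {R : ∀ i, X i → X i → Prop} {S : ∀ j, Y j → Y j → Prop}

theorem isHom_sigmaMap_iff :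
    IsHom (unionRel R) (unionRel S) (Sigma.map f g) ↔ ∀ i, IsHom (R i) (S (f i)) (g i) := by
  constructor
  · intro h i x y hxy
    exact (unionRel_mk_mk_iff S _ _ _).1 (h ⟨i, x⟩ ⟨i, y⟩ ⟨rfl, hxy⟩)
  · rintro h ⟨i, x⟩ ⟨i', y⟩ ⟨hi, hxy⟩
    obtain rfl : i = i' := hi
    exact ⟨rfl, h i x y hxy⟩

theorem isIso_sigmaMap_iff (hf : Bijective f) :
    IsIso (unionRel R) (unionRel S) (Sigma.map f g) ↔ ∀ i, IsIso (R i) (S (f i)) (g i) := by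
  constructor
  · intro h i
    refine ⟨⟨h.1.1.of_sigma_map i, h.1.2.of_sigma_map hf.1 i⟩, fun x y => ?_⟩
    rw [← unionRel_mk_mk_iff R, ← unionRel_mk_mk_iff S]
    exact h.2 ⟨i, x⟩ ⟨i, y⟩
  · intro h
    refine ⟨⟨hf.1.sigma_map fun i => (h i).1.1, hf.2.sigma_map fun i => (h i).1.2⟩, ?_⟩
    rintro ⟨i, x⟩ ⟨i', y⟩
    by_cases hi : i = i'
    · subst hi
      rw [unionRel_mk_mk_iff, (h i).2]
      exact (unionRel_mk_mk_iff S _ _ _).symm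
    · exact iff_of_false (fun h' => hi h'.1) fun h' => hi (hf.1 h'.1)

theorem injective_of_isIso_sigmaMap (hX : ∀ i, Nonempty (X i)) (hconn : ∀ j, Connected (S j))
    (h : IsIso (unionRel R) (unionRel S) (Sigma.map f g)) : Injective f := by
  intro i₁ i₂ hf
  obtain ⟨x₁⟩ := hX i₁
  obtain ⟨x₂⟩ := hX i₂
  have := fst_eq_of_isHom_unionRel hconn h.isHom_surjInv
    (a := Sigma.map f g ⟨i₁, x₁⟩) (b := Sigma.map f g ⟨i₂, x₂⟩) hf
  rwa [leftInverse_surjInv h.1, leftInverse_surjInv h.1] at this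

end SigmaMap

/-- **Theorem (Statement 2).** Let `⟨X i, R i⟩`, `i ∈ I`, be pairwise disjoint (realized by a
sigma type) connected binary structures. Then the disjoint union is reversible iff:
whenever `f : I → I` is a surjection, `g i : X i → X (f i)` are monomorphisms, and for each
`j ∈ I` the family `{g i [X i] : i ∈ f⁻¹[{j}]}` is a partition of `X j` (the ranges are
pairwise disjoint and cover `X j`; they are non-empty since the `X i` are connected, hence
non-empty), then `f` is a bijection and each `g i` is an isomorphism onto `X (f i)`. -/
theorem stmt2 {I : Type u} {X : I → Type v} (R : ∀ i, X i → X i → Prop)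
    (hconn : ∀ i, Connected (R i)) :
    Reversible (unionRel R) ↔
      ∀ (f : I → I) (g : ∀ i, X i → X (f i)),
        Function.Surjective f →
        (∀ i, IsMono (R i) (R (f i)) (g i)) →
        -- the ranges of the `g i`, `i ∈ f⁻¹[{j}]`, are pairwise disjoint …
        (∀ (j : I) (i₁ i₂ : I) (h₁ : f i₁ = j) (h₂ : f i₂ = j) (x₁ : X i₁) (x₂ : X i₂),
          h₁ ▸ g i₁ x₁ = h₂ ▸ g i₂ x₂ → i₁ = i₂) →
        -- … and cover `X j`, i.e. they form a partition of `X j`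
        (∀ (j : I) (y : X j), ∃ (i : I) (h : f i = j) (x : X i), h ▸ g i x = y) →
        Function.Bijective f ∧ ∀ i, IsIso (R i) (R (f i)) (g i) := by
  have hne : ∀ i, Nonempty (X i) := fun i => (hconn i).1
  constructor
  · intro hrev f g hf hg hdisj hcover
    have hF : IsIso (unionRel R) (unionRel R) (Sigma.map f g) :=
      hrev _ ⟨⟨injective_sigmaMap_iff.2 ⟨hdisj, fun i => (hg i).1⟩,
        surjective_sigmaMap_iff.2 hcover⟩, isHom_sigmaMap_iff.2 fun i => (hg i).2⟩
    have hfbij : Bijective f := ⟨injective_of_isIso_sigmaMap hne hconn hF, hf⟩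
    exact ⟨hfbij, (isIso_sigmaMap_iff hfbij).1 hF⟩
  · rintro h F ⟨hbij, hhom⟩
    obtain ⟨f, g, rfl⟩ :=
      exists_sigmaMap_eq hne F fun a b => fst_eq_of_isHom_unionRel hconn hhom
    obtain ⟨hdisj, hginj⟩ := injective_sigmaMap_iff.1 hbij.1
    obtain ⟨hfbij, hgiso⟩ := h f g (hbij.2.of_sigma_map_left hne)
      (fun i => ⟨hginj i, isHom_sigmaMap_iff.1 hhom i⟩) hdisj (surjective_sigmaMap_iff.1 hbij.2)
    exact (isIso_sigmaMap_iff hfbij).2 hgiso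
end

section
/- Let X_i, i ∈ I, be pairwise disjoint, connected and finite binary structures. Then ⋃_{i∈I} X_i is reversible if and only if ⟨X_i : i ∈ I⟩ is a reversible sequence of structures and there are no i, j ∈ I such that the sets {k ∈ I : X_k ≅ X_i} and {k ∈ I : X_k ≅ X_j} are both infinite and X_i ≺_c X_j. -/
universe u v w

/-! ### Auxiliary material -/

set_option linter.unusedVariables false
set_option linter.unusedSectionVars false

lemma unionRel_mk {I : Type*} {X : I → Type*} (R : ∀ i, X i → X i → Prop) {i : I}
    (x y : X i) : unionRel R ⟨i, x⟩ ⟨i, y⟩ ↔ R i x y := by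
  constructor
  · rintro ⟨h, hr⟩; exact hr
  · intro h; exact ⟨rfl, h⟩

lemma eqvGen_map {α β : Type*} {r : α → α → Prop} {s : β → β → Prop} {f : α → β}
    (hf : ∀ x y, r x y → s (f x) (f y)) {x y : α} (h : Relation.EqvGen r x y) :
    Relation.EqvGen s (f x) (f y) := by
  induction h with
  | rel a b hab => exact Relation.EqvGen.rel _ _ (hf a b hab)
  | refl a => exact Relation.EqvGen.refl _
  | symm a b _ ih => exact ih.symm _ _
  | trans a b c _ _ ih1 ih2 => exact ih1.trans _ _ _ ih2

lemma eqvGen_const {α β : Type*} {r : α → α → Prop} {W : α → β}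
    (hW : ∀ x y, r x y → W x = W y) {x y : α} (h : Relation.EqvGen r x y) : W x = W y := by
  induction h with
  | rel a b hab => exact hW a b hab
  | refl a => rfl
  | symm a b _ ih => exact ih.symm
  | trans a b c _ _ ih1 ih2 => exact ih1.trans ih2

lemma sigma_eq_of_fst {I : Type*} {X : I → Type*} {p : Σ i, X i} {j : I} (h : p.1 = j) :
    p = ⟨j, cast (congrArg X h) p.2⟩ := by
  obtain ⟨i, x⟩ := p
  subst h
  rfl

lemma cast_of_sigma_eq {I : Type*} {X : I → Type*} {a b : I} {x : X a} {y : X b}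
    (h : (⟨a, x⟩ : Σ i, X i) = ⟨b, y⟩) (hab : a = b) : cast (congrArg X hab) x = y := by
  subst hab
  rw [cast_eq]
  exact eq_of_heq (Sigma.mk.inj_iff.mp h).2

/-- number of related pairs -/
noncomputable def edges {α : Type*} (r : α → α → Prop) : ℕ :=
  Nat.card {p : α × α // r p.1 p.2}

section EdgeLemmas
variable {α β γ : Type*} {r : α → α → Prop} {s : β → β → Prop} {t : γ → γ → Prop}
  {f : α → β} {g : β → γ}

lemma isCond_comp (hf : IsCond r s f) (hg : IsCond s t g) : IsCond r t (g ∘ f) :=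
  ⟨hg.1.comp hf.1, fun x y h => hg.2 _ _ (hf.2 _ _ h)⟩
lemma isIso_comp (hf : IsIso r s f) (hg : IsIso s t g) : IsIso r t (g ∘ f) :=
  ⟨hg.1.comp hf.1, fun x y => (hf.2 x y).trans (hg.2 _ _)⟩
lemma IsIso.isCond (hf : IsIso r s f) : IsCond r s f := ⟨hf.1, fun x y h => (hf.2 x y).1 h⟩
lemma isIso_id (r : α → α → Prop) : IsIso r r id := ⟨Function.bijective_id, fun _ _ => Iff.rfl⟩

lemma isIso_symm (hf : IsIso r s f) : ∃ g : β → α, IsIso s r g := by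
  refine ⟨(Equiv.ofBijective f hf.1).symm, (Equiv.ofBijective f hf.1).symm.bijective, ?_⟩
  intro x y
  have hx : f ((Equiv.ofBijective f hf.1).symm x) = x :=
    (Equiv.ofBijective f hf.1).apply_symm_apply x
  have hy : f ((Equiv.ofBijective f hf.1).symm y) = y :=
    (Equiv.ofBijective f hf.1).apply_symm_apply y
  rw [hf.2 ((Equiv.ofBijective f hf.1).symm x) ((Equiv.ofBijective f hf.1).symm y), hx, hy]

variable [Finite α] [Finite β]

/-- the induced map on related pairs -/
def pairMap (f : α → β) (h : IsHom r s f) :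
    {p : α × α // r p.1 p.2} → {p : β × β // s p.1 p.2} :=
  fun p => ⟨(f p.1.1, f p.1.2), h _ _ p.2⟩

omit [Finite α] [Finite β] in
lemma pairMap_injective (hf : Function.Injective f) (h : IsHom r s f) :
    Function.Injective (pairMap f h) := by
  rintro ⟨⟨a, b⟩, hab⟩ ⟨⟨c, d⟩, hcd⟩ he
  simp only [pairMap, Subtype.mk.injEq, Prod.mk.injEq] at he
  exact Subtype.ext (Prod.ext (hf he.1) (hf he.2))

lemma edges_le_of_cond (hf : IsCond r s f) : edges r ≤ edges s :=
  Nat.card_le_card_of_injective _ (pairMap_injective hf.1.1 hf.2)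

lemma isIso_of_cond_edges_le (hf : IsCond r s f) (hle : edges s ≤ edges r) : IsIso r s f := by
  have hinj := pairMap_injective hf.1.1 hf.2
  have hcard : Nat.card {p : α × α // r p.1 p.2} = Nat.card {p : β × β // s p.1 p.2} :=
    le_antisymm (Nat.card_le_card_of_injective _ hinj) hle
  have hbij : Function.Bijective (pairMap f hf.2) :=
    (Nat.bijective_iff_injective_and_card _).mpr ⟨hinj, hcard⟩
  refine ⟨hf.1, fun x y => ⟨fun h => hf.2 _ _ h, fun h => ?_⟩⟩
  obtain ⟨⟨⟨a, b⟩, hab⟩, he⟩ := hbij.2 ⟨(f x, f y), h⟩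
  simp only [pairMap, Subtype.mk.injEq, Prod.mk.injEq] at he
  rwa [hf.1.1 he.1, hf.1.1 he.2] at hab

lemma edges_lt_of_cond_not_iso (hf : IsCond r s f) (hni : ¬ IsIso r s f) :
    edges r < edges s :=
  lt_of_le_of_ne (edges_le_of_cond hf) fun h => hni (isIso_of_cond_edges_le hf h.ge)

omit [Finite β] in
lemma edges_le_sq (r : α → α → Prop) : edges r ≤ Nat.card α * Nat.card α := by
  have := Nat.card_le_card_of_injective (Subtype.val : {p : α × α // r p.1 p.2} → α × α)
    Subtype.val_injective
  simpa [edges, Nat.card_prod] using this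

end EdgeLemmas

lemma antitone_eventually_const (a : ℕ → ℕ) (h : ∀ k, a (k + 1) ≤ a k) :
    ∃ K, ∀ k, a (K + k) = a K := by
  have hmono : Antitone a := antitone_nat_of_succ_le h
  have hne : (Set.range a).Nonempty := ⟨a 0, 0, rfl⟩
  obtain ⟨K, hK⟩ : ∃ K, a K = sInf (Set.range a) := by
    obtain ⟨K, hK⟩ := Nat.sInf_mem hne
    exact ⟨K, hK⟩
  refine ⟨K, fun k => le_antisymm (hmono (Nat.le_add_right _ _)) ?_⟩
  rw [hK]; exact Nat.sInf_le ⟨K + k, rfl⟩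

lemma monotone_eventually_const (a : ℕ → ℕ) (h : ∀ k, a k ≤ a (k + 1)) (B : ℕ)
    (hB : ∀ k, a k ≤ B) : ∃ K, ∀ k, a (K + k) = a K := by
  obtain ⟨K, hK⟩ := antitone_eventually_const (fun k => B - a k)
    (fun k => Nat.sub_le_sub_left (h k) B)
  refine ⟨K, fun k => ?_⟩
  have h1 := hK k
  have h2 := hB (K + k)
  have h3 := hB K
  omega

/-- The key orbit argument: if `g` is a bijective "component map" admitting componentwise
condensations, and the condensation at `i0` is strict (increases the edge count), then one
finds a bad pair (two infinite isomorphism classes strictly comparable by condensation). -/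
theorem orbit_aux {I : Type u} {X : I → Type v} (R : ∀ i, X i → X i → Prop)
    (hfin : ∀ i, Finite (X i)) (g : I → I) (hg : Function.Bijective g)
    (hstep : ∀ i, ∃ c : X i → X (g i), IsCond (R i) (R (g i)) c)
    (i0 : I) (hlt : edges (R i0) < edges (R (g i0))) :
    ∃ i j : I,
      {k : I | ∃ F : X k → X i, IsIso (R k) (R i) F}.Infinite ∧
      {k : I | ∃ F : X k → X j, IsIso (R k) (R j) F}.Infinite ∧
      (∃ F : X i → X j, IsCond (R i) (R j) F) ∧
      ¬ ∃ F : X j → X i, IsCond (R j) (R i) F := by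
  classical
  haveI := hfin
  set G : I ≃ I := Equiv.ofBijective g hg with hG
  have hGapp : ∀ z, G z = g z := fun z => rfl
  set σ : I → I := ⇑G.symm with hσ
  have hgσ : ∀ z, g (σ z) = z := fun z => G.apply_symm_apply z
  have cndT : ∀ {i j k : I}, (∃ F : X i → X j, IsCond (R i) (R j) F) →
      (∃ F : X j → X k, IsCond (R j) (R k) F) → ∃ F : X i → X k, IsCond (R i) (R k) F := by
    rintro i j k ⟨f1, h1⟩ ⟨f2, h2⟩; exact ⟨f2 ∘ f1, isCond_comp h1 h2⟩
  have isoT : ∀ {i j k : I}, (∃ F : X i → X j, IsIso (R i) (R j) F) →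
      (∃ F : X j → X k, IsIso (R j) (R k) F) → ∃ F : X i → X k, IsIso (R i) (R k) F := by
    rintro i j k ⟨f1, h1⟩ ⟨f2, h2⟩; exact ⟨f2 ∘ f1, isIso_comp h1 h2⟩
  have isoS : ∀ {i j : I}, (∃ F : X i → X j, IsIso (R i) (R j) F) →
      ∃ F : X j → X i, IsIso (R j) (R i) F := by
    rintro i j ⟨f1, h1⟩; exact isIso_symm h1
  have isoR : ∀ i : I, ∃ F : X i → X i, IsIso (R i) (R i) F := fun i => ⟨id, isIso_id _⟩
  have hE : ∀ i, edges (R i) ≤ edges (R (g i)) := by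
    intro i; obtain ⟨c, hc⟩ := hstep i
    exact edges_le_of_cond hc
  -- forward sequence
  set a : ℕ → ℕ := fun k => edges (R (g^[k] i0)) with ha
  have hamono : ∀ k, a k ≤ a (k + 1) := by
    intro k
    have h1 : g^[k+1] i0 = g (g^[k] i0) := Function.iterate_succ_apply' g k i0
    show edges (R (g^[k] i0)) ≤ edges (R (g^[k+1] i0))
    rw [h1]
    exact hE _
  have haMono : Monotone a := monotone_nat_of_le_succ hamono
  have haN : ∀ k, Nat.card (X (g^[k] i0)) = Nat.card (X i0) := by
    intro k
    induction k with
    | zero => rfl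
    | succ n ih =>
      rw [Function.iterate_succ_apply' g n i0, ← Nat.card_eq_of_bijective _
        (Classical.choose_spec (hstep (g^[n] i0))).1]
      exact ih
  have haB : ∀ k, a k ≤ Nat.card (X i0) * Nat.card (X i0) := by
    intro k
    calc a k ≤ Nat.card (X (g^[k] i0)) * Nat.card (X (g^[k] i0)) := edges_le_sq _
    _ = Nat.card (X i0) * Nat.card (X i0) := by rw [haN k]
  obtain ⟨K, hK⟩ := monotone_eventually_const a hamono _ haB
  -- backward sequence
  set b : ℕ → ℕ := fun k => edges (R (σ^[k] i0)) with hb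
  have hbanti : ∀ k, b (k + 1) ≤ b k := by
    intro k
    have h1 : σ^[k+1] i0 = σ (σ^[k] i0) := Function.iterate_succ_apply' σ k i0
    have h2 := hE (σ (σ^[k] i0))
    rw [hgσ (σ^[k] i0)] at h2
    show edges (R (σ^[k+1] i0)) ≤ edges (R (σ^[k] i0))
    rw [h1]
    exact h2
  have hbAnti : Antitone b := antitone_nat_of_succ_le hbanti
  obtain ⟨K', hK'⟩ := antitone_eventually_const b hbanti
  -- no periodicity
  have ha01 : a 0 < a 1 := by
    exact hlt
  have hfix : ∀ p, 1 ≤ p → g^[p] i0 ≠ i0 := by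
    intro p hp h
    have h1 : a p = a 0 := by
      show edges (R (g^[p] i0)) = edges (R (g^[0] i0))
      rw [h]
      rfl
    have h2 : a 1 ≤ a p := haMono hp
    omega
  have hforward_lt : ∀ m l, m < l → g^[m] i0 ≠ g^[l] i0 := by
    intro m l hml h
    have h1 : g^[l] i0 = g^[m] (g^[l - m] i0) := by
      rw [← Function.iterate_add_apply]
      congr 1
      omega
    rw [h1] at h
    have h2 : g^[l - m] i0 = i0 := (hg.1.iterate m) h.symm
    exact hfix (l - m) (by omega) h2
  have hσgp : ∀ p z, g^[p] (σ^[p] z) = z := by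
    intro p
    induction p with
    | zero => intro z; rfl
    | succ n ih =>
      intro z
      rw [Function.iterate_succ_apply' σ n z, Function.iterate_succ_apply g n,
        hgσ (σ^[n] z), ih z]
  have hback_lt : ∀ m l, m < l → σ^[m] i0 ≠ σ^[l] i0 := by
    intro m l hml h
    have h1 : σ^[l] i0 = σ^[m] (σ^[l - m] i0) := by
      rw [← Function.iterate_add_apply]
      congr 1
      omega
    rw [h1] at h
    have hσinj : Function.Injective σ := G.symm.injective
    have h2 : σ^[l - m] i0 = i0 := (hσinj.iterate m) h.symm
    have h3 : g^[l - m] (σ^[l - m] i0) = g^[l - m] i0 := by rw [h2]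
    rw [hσgp] at h3
    exact hfix (l - m) (by omega) h3.symm
  -- forward isos beyond K
  have haconst : ∀ m, K ≤ m → a m = a K := by
    intro m hm
    have := hK (m - K)
    rwa [Nat.add_sub_cancel' hm] at this
  have hstepiso_f : ∀ m, K ≤ m →
      ∃ F : X (g^[m] i0) → X (g^[m+1] i0), IsIso (R (g^[m] i0)) (R (g^[m+1] i0)) F := by
    intro m hm
    have hcnd := hstep (g^[m] i0)
    have hiter : g^[m+1] i0 = g (g^[m] i0) := Function.iterate_succ_apply' g m i0
    rw [← hiter] at hcnd
    obtain ⟨c, hc⟩ := hcnd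
    have hle : edges (R (g^[m+1] i0)) ≤ edges (R (g^[m] i0)) := by
      have e1 : a (m+1) = a K := haconst (m+1) (by omega)
      have e2 : a m = a K := haconst m hm
      simp only [ha] at e1 e2
      omega
    exact ⟨c, isIso_of_cond_edges_le hc hle⟩
  have hisoF : ∀ m, K + 1 ≤ m →
      ∃ F : X (g^[K+1] i0) → X (g^[m] i0), IsIso (R (g^[K+1] i0)) (R (g^[m] i0)) F := by
    intro m hm
    induction m, hm using Nat.le_induction with
    | base => exact isoR _
    | succ n hn ih => exact isoT ih (hstepiso_f n (by omega))
  -- backward isos beyond K'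
  have hbconst : ∀ m, K' ≤ m → b m = b K' := by
    intro m hm
    have := hK' (m - K')
    rwa [Nat.add_sub_cancel' hm] at this
  have hstepiso_b : ∀ m, K' ≤ m →
      ∃ F : X (σ^[m+1] i0) → X (σ^[m] i0), IsIso (R (σ^[m+1] i0)) (R (σ^[m] i0)) F := by
    intro m hm
    have hcnd := hstep (σ^[m+1] i0)
    have h1 : g (σ^[m+1] i0) = σ^[m] i0 := by
      rw [Function.iterate_succ_apply' σ m i0, hgσ]
    rw [h1] at hcnd
    obtain ⟨c, hc⟩ := hcnd
    have hle : edges (R (σ^[m] i0)) ≤ edges (R (σ^[m+1] i0)) := by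
      have e1 : b (m+1) = b K' := hbconst (m+1) (by omega)
      have e2 : b m = b K' := hbconst m hm
      simp only [hb] at e1 e2
      omega
    exact ⟨c, isIso_of_cond_edges_le hc hle⟩
  have hisoB : ∀ m, K' ≤ m →
      ∃ F : X (σ^[m] i0) → X (σ^[K'] i0), IsIso (R (σ^[m] i0)) (R (σ^[K'] i0)) F := by
    intro m hm
    induction m, hm using Nat.le_induction with
    | base => exact isoR _
    | succ n hn ih => exact isoT (hstepiso_b n (by omega)) ih
  -- condensation chains
  have hcndB : ∀ m, ∃ F : X (σ^[m] i0) → X i0, IsCond (R (σ^[m] i0)) (R i0) F := by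
    intro m
    induction m with
    | zero => exact ⟨id, (isIso_id _).isCond⟩
    | succ n ih =>
      have hcnd := hstep (σ^[n+1] i0)
      have h1 : g (σ^[n+1] i0) = σ^[n] i0 := by
        rw [Function.iterate_succ_apply' σ n i0, hgσ]
      rw [h1] at hcnd
      exact cndT hcnd ih
  have hcndF : ∀ m, ∃ F : X i0 → X (g^[m] i0), IsCond (R i0) (R (g^[m] i0)) F := by
    intro m
    induction m with
    | zero => exact ⟨id, (isIso_id _).isCond⟩
    | succ n ih =>
      have hcnd := hstep (g^[n] i0)
      have h1 : g^[n+1] i0 = g (g^[n] i0) := Function.iterate_succ_apply' g n i0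
      rw [← h1] at hcnd
      exact cndT ih hcnd
  -- the pair
  refine ⟨σ^[K'] i0, g^[K+1] i0, ?_, ?_, ?_, ?_⟩
  · have hinj : Function.Injective (fun k : ℕ => σ^[K' + k] i0) := by
      intro k1 k2 h
      by_contra hne
      rcases Nat.lt_or_ge k1 k2 with h1 | h1
      · exact hback_lt (K' + k1) (K' + k2) (by omega) h
      · exact hback_lt (K' + k2) (K' + k1) (by omega) h.symm
    exact Set.infinite_of_injective_forall_mem hinj
      (fun k => hisoB (K' + k) (by omega))
  · have hinj : Function.Injective (fun k : ℕ => g^[K + 1 + k] i0) := by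
      intro k1 k2 h
      by_contra hne
      rcases Nat.lt_or_ge k1 k2 with h1 | h1
      · exact hforward_lt (K + 1 + k1) (K + 1 + k2) (by omega) h
      · exact hforward_lt (K + 1 + k2) (K + 1 + k1) (by omega) h.symm
    exact Set.infinite_of_injective_forall_mem hinj
      (fun k => isoS (hisoF (K + 1 + k) (by omega)))
  · exact cndT (hcndB K') (hcndF (K + 1))
  · rintro ⟨F, hF⟩
    have h1 : edges (R (g^[K+1] i0)) ≤ edges (R (σ^[K'] i0)) := edges_le_of_cond hF
    have h2 : b K' ≤ b 0 := hbAnti (Nat.zero_le K')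
    have h3 : a 1 ≤ a (K + 1) := haMono (by omega)
    have hb0 : b 0 = a 0 := rfl
    simp only [ha, hb, Function.iterate_zero_apply, Function.iterate_one]
      at h1 h2 h3 hb0 ha01 ⊢
    omega

/-- Reversibility implies the sequence condition. -/
theorem rev_to_a {I : Type u} {X : I → Type v} (R : ∀ i, X i → X i → Prop)
    (hconn : ∀ i, Connected (R i)) (hrev : Reversible (unionRel R)) :
    ¬ ∃ f : I → I, Function.Surjective f ∧ ¬ Function.Bijective f ∧
        ∀ j : I, ∃ F : (Σ i : {i : I // f i = j}, X i.1) → X j,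
          IsCond (unionRel (fun i : {i : I // f i = j} => R i.1)) (R j) F := by
  rintro ⟨f, hsurj, hnbij, hFex⟩
  choose Fj hFj using hFex
  classical
  let e1 : (Σ i, X i) ≃ (Σ j, Σ i : {i : I // f i = j}, X i.1) :=
    { toFun := fun p => ⟨f p.1, ⟨p.1, rfl⟩, p.2⟩
      invFun := fun q => ⟨q.2.1.1, q.2.2⟩
      left_inv := fun ⟨i, x⟩ => rfl
      right_inv := fun ⟨j, ⟨i, hi⟩, x⟩ => by subst hi; rfl }
  let E : (Σ i, X i) ≃ (Σ i, X i) :=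
    e1.trans (Equiv.sigmaCongrRight fun j => Equiv.ofBijective (Fj j) (hFj j).1)
  have hEapp : ∀ (i : I) (x : X i), E ⟨i, x⟩ = ⟨f i, Fj (f i) ⟨⟨i, rfl⟩, x⟩⟩ :=
    fun i x => rfl
  have hEcond : IsCond (unionRel R) (unionRel R) ⇑E := by
    refine ⟨E.bijective, ?_⟩
    rintro ⟨i, x⟩ ⟨i', y⟩ ⟨h, hr⟩
    simp only at h
    subst h
    have hr' : R i x y := hr
    rw [hEapp i x, hEapp i y]
    exact (unionRel_mk R _ _).mpr ((hFj (f i)).2 ⟨⟨i, rfl⟩, x⟩ ⟨⟨i, rfl⟩, y⟩ ⟨rfl, hr'⟩)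
  have hIso := hrev E hEcond
  have hninj : ¬ Function.Injective f := fun hinj => hnbij ⟨hinj, hsurj⟩
  obtain ⟨i1, i2, hfeq, hne⟩ := Function.not_injective_iff.mp hninj
  have claim : ∃ u v : Σ i : {i : I // f i = f i1}, X i.1,
      u.1.1 ≠ v.1.1 ∧ R (f i1) (Fj (f i1) u) (Fj (f i1) v) := by
    by_contra hno
    push_neg at hno
    set Φ := Fj (f i1) with hΦdef
    have hbijΦ := (hFj (f i1)).1
    set Q := Equiv.ofBijective Φ hbijΦ with hQ
    set W : X (f i1) → I := fun z => (Q.symm z).1.1 with hWdef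
    have hW : ∀ a b, R (f i1) a b → W a = W b := by
      intro a b hab
      have ha : Φ (Q.symm a) = a := Q.apply_symm_apply a
      have hb : Φ (Q.symm b) = b := Q.apply_symm_apply b
      have hab' : R (f i1) (Φ (Q.symm a)) (Φ (Q.symm b)) := by rw [ha, hb]; exact hab
      by_contra hne'
      exact hno (Q.symm a) (Q.symm b) hne' hab'
    have x1 : X i1 := Classical.choice (hconn i1).1
    have x2 : X i2 := Classical.choice (hconn i2).1
    set u1 : Σ i : {i : I // f i = f i1}, X i.1 := ⟨⟨i1, rfl⟩, x1⟩ with hu1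
    set u2 : Σ i : {i : I // f i = f i1}, X i.1 := ⟨⟨i2, hfeq.symm⟩, x2⟩ with hu2
    have hWa : W (Q u1) = i1 := by rw [hWdef]; simp [Q.symm_apply_apply, hu1]
    have hWb : W (Q u2) = i2 := by rw [hWdef]; simp [Q.symm_apply_apply, hu2]
    have := eqvGen_const hW ((hconn (f i1)).2 (Q u1) (Q u2))
    rw [hWa, hWb] at this
    exact hne this
  obtain ⟨u, v, huv, hrel⟩ := claim
  have hnxy : ¬ unionRel R ⟨u.1.1, u.2⟩ ⟨v.1.1, v.2⟩ := fun h => huv h.1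
  have hEmem : ∀ (jj : I) (i : I) (hi : f i = jj) (t : X i),
      E ⟨i, t⟩ = ⟨jj, Fj jj ⟨⟨i, hi⟩, t⟩⟩ := by
    intro jj i hi t; subst hi; rfl
  have hxy : unionRel R (E ⟨u.1.1, u.2⟩) (E ⟨v.1.1, v.2⟩) := by
    rw [hEmem (f i1) u.1.1 u.1.2 u.2, hEmem (f i1) v.1.1 v.1.2 v.2]
    exact (unionRel_mk R _ _).mpr hrel
  exact hnxy ((hIso.2 _ _).mpr hxy)

/-- Reversibility excludes a strictly condensation-comparable pair of infinite iso classes. -/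
theorem rev_to_b {I : Type u} {X : I → Type v} (R : ∀ i, X i → X i → Prop)
    (hrev : Reversible (unionRel R)) :
    ¬ ∃ i j : I,
        {k : I | ∃ F : X k → X i, IsIso (R k) (R i) F}.Infinite ∧
        {k : I | ∃ F : X k → X j, IsIso (R k) (R j) F}.Infinite ∧
        (∃ F : X i → X j, IsCond (R i) (R j) F) ∧
        ¬ ∃ F : X j → X i, IsCond (R j) (R i) F := by
  classical
  rintro ⟨i0, j0, hAinf, hBinf, hc0, hnc⟩
  have cndT : ∀ {i j k : I}, (∃ F : X i → X j, IsCond (R i) (R j) F) →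
      (∃ F : X j → X k, IsCond (R j) (R k) F) → ∃ F : X i → X k, IsCond (R i) (R k) F := by
    rintro i j k ⟨f1, h1⟩ ⟨f2, h2⟩; exact ⟨f2 ∘ f1, isCond_comp h1 h2⟩
  have isoT : ∀ {i j k : I}, (∃ F : X i → X j, IsIso (R i) (R j) F) →
      (∃ F : X j → X k, IsIso (R j) (R k) F) → ∃ F : X i → X k, IsIso (R i) (R k) F := by
    rintro i j k ⟨f1, h1⟩ ⟨f2, h2⟩; exact ⟨f2 ∘ f1, isIso_comp h1 h2⟩
  have isoS : ∀ {i j : I}, (∃ F : X i → X j, IsIso (R i) (R j) F) →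
      ∃ F : X j → X i, IsIso (R j) (R i) F := by
    rintro i j ⟨f1, h1⟩; exact isIso_symm h1
  have hdisj : ∀ k : I, ¬ ((∃ F : X k → X i0, IsIso (R k) (R i0) F) ∧
      (∃ F : X k → X j0, IsIso (R k) (R j0) F)) := by
    rintro k ⟨h1, h2⟩
    have h3 := isoT (isoS h2) h1
    exact hnc (h3.elim fun F hF => ⟨F, hF.isCond⟩)
  set aemb := hAinf.natEmbedding with haemb
  set bemb := hBinf.natEmbedding with hbemb
  set aa : ℕ → I := fun n => (aemb n : I) with haa
  set bb : ℕ → I := fun n => (bemb n : I) with hbb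
  have haaInj : Function.Injective aa := fun n m h => aemb.injective (Subtype.ext h)
  have hbbInj : Function.Injective bb := fun n m h => bemb.injective (Subtype.ext h)
  have haaA : ∀ n, ∃ F : X (aa n) → X i0, IsIso (R (aa n)) (R i0) F := fun n => (aemb n).2
  have hbbB : ∀ n, ∃ F : X (bb n) → X j0, IsIso (R (bb n)) (R j0) F := fun n => (bemb n).2
  have hab : ∀ n m, aa n ≠ bb m := by
    intro n m h
    apply hdisj (aa n)
    refine ⟨haaA n, ?_⟩
    rw [h]
    exact hbbB m
  set e : ℤ → I := fun n => match n with
    | Int.ofNat m => bb m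
    | Int.negSucc m => aa m with he
  have heOf : ∀ m : ℕ, e (Int.ofNat m) = bb m := fun m => rfl
  have heNeg : ∀ m : ℕ, e (Int.negSucc m) = aa m := fun m => rfl
  have einj : Function.Injective e := by
    intro n m h
    rcases n with n1 | n1 <;> rcases m with m1 | m1
    · exact congrArg Int.ofNat (hbbInj h)
    · exact absurd h.symm (hab m1 n1)
    · exact absurd h (hab n1 m1)
    · exact congrArg Int.negSucc (haaInj h)
  set eE : ℤ ↪ I := ⟨e, einj⟩ with heE
  set σp : Equiv.Perm I := (Equiv.addRight (1 : ℤ)).viaEmbedding eE with hσp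
  have hσe : ∀ n : ℤ, σp (e n) = e (n + 1) := by
    intro n
    have := (Equiv.addRight (1 : ℤ)).viaEmbedding_apply eE n
    exact this
  have hσid : ∀ i : I, i ∉ Set.range e → σp i = i := by
    intro i hi
    exact (Equiv.addRight (1 : ℤ)).viaEmbedding_apply_of_notMem eE i hi
  have hchain : ∀ n : ℤ, ∃ F : X (e n) → X (e (n + 1)), IsCond (R (e n)) (R (e (n + 1))) F := by
    intro n
    match n with
    | Int.ofNat m =>
      have h1 : (Int.ofNat m) + 1 = Int.ofNat (m + 1) := rfl
      rw [h1, heOf, heOf]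
      exact (isoT (hbbB m) (isoS (hbbB (m + 1)))).elim fun F hF => ⟨F, hF.isCond⟩
    | Int.negSucc 0 =>
      have h1 : (Int.negSucc 0) + 1 = Int.ofNat 0 := rfl
      rw [h1, heNeg, heOf]
      have h2 : ∃ F : X (aa 0) → X i0, IsCond (R (aa 0)) (R i0) F :=
        (haaA 0).elim fun F hF => ⟨F, hF.isCond⟩
      have h3 : ∃ F : X j0 → X (bb 0), IsCond (R j0) (R (bb 0)) F :=
        (isoS (hbbB 0)).elim fun F hF => ⟨F, hF.isCond⟩
      exact cndT h2 (cndT hc0 h3)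
    | Int.negSucc (m + 1) =>
      have h1 : (Int.negSucc (m + 1)) + 1 = Int.negSucc m := rfl
      rw [h1, heNeg, heNeg]
      exact (isoT (haaA (m + 1)) (isoS (haaA m))).elim fun F hF => ⟨F, hF.isCond⟩
  have Φex : ∀ i : I, ∃ q : X i ≃ X (σp i), IsHom (R i) (R (σp i)) ⇑q := by
    intro i
    by_cases h : i ∈ Set.range e
    · obtain ⟨n, rfl⟩ := h
      rw [hσe n]
      obtain ⟨F, hF⟩ := hchain n
      exact ⟨Equiv.ofBijective F hF.1, hF.2⟩
    · rw [hσid i h]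
      exact ⟨Equiv.refl _, fun x y hxy => hxy⟩
  choose Φ hΦ using Φex
  set E : (Σ i, X i) ≃ (Σ i, X i) := Equiv.sigmaCongr σp Φ with hEdef
  have hEapp : ∀ (i : I) (x : X i), E ⟨i, x⟩ = ⟨σp i, Φ i x⟩ := fun i x => rfl
  have hEcond : IsCond (unionRel R) (unionRel R) ⇑E := by
    refine ⟨E.bijective, ?_⟩
    rintro ⟨i, x⟩ ⟨i', y⟩ ⟨h, hr⟩
    simp only at h
    subst h
    have hr' : R i x y := hr
    rw [hEapp i x, hEapp i y]
    exact (unionRel_mk R _ _).mpr (hΦ i x y hr')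
  have hIso := hrev E hEcond
  have hcrit : ∀ i : I, ∃ F : X i → X (σp i), IsIso (R i) (R (σp i)) F := by
    intro i
    refine ⟨Φ i, (Φ i).bijective, fun x y => ⟨hΦ i x y, fun h => ?_⟩⟩
    have h1 : unionRel R (E ⟨i, x⟩) (E ⟨i, y⟩) := by
      rw [hEapp i x, hEapp i y]
      exact (unionRel_mk R _ _).mpr h
    have h2 := (hIso.2 ⟨i, x⟩ ⟨i, y⟩).mpr h1
    exact (unionRel_mk R x y).mp h2
  have hAB : ∃ F : X (aa 0) → X (bb 0), IsIso (R (aa 0)) (R (bb 0)) F := by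
    have h1 := hcrit (e (Int.negSucc 0))
    rw [hσe (Int.negSucc 0)] at h1
    have h2 : (Int.negSucc 0) + 1 = Int.ofNat 0 := rfl
    rw [h2] at h1
    exact h1
  apply hnc
  have hiso1 : ∃ F : X j0 → X (bb 0), IsIso (R j0) (R (bb 0)) F := isoS (hbbB 0)
  have hiso2 : ∃ F : X (bb 0) → X (aa 0), IsIso (R (bb 0)) (R (aa 0)) F := isoS hAB
  have hiso3 := isoT hiso1 (isoT hiso2 (haaA 0))
  exact hiso3.elim fun F hF => ⟨F, hF.isCond⟩

/-- The sufficiency direction. -/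
theorem rev_of {I : Type u} {X : I → Type v} (R : ∀ i, X i → X i → Prop)
    (hconn : ∀ i, Connected (R i)) (hfin : ∀ i, Finite (X i))
    (hA : ¬ ∃ f : I → I, Function.Surjective f ∧ ¬ Function.Bijective f ∧
          ∀ j : I, ∃ F : (Σ i : {i : I // f i = j}, X i.1) → X j,
            IsCond (unionRel (fun i : {i : I // f i = j} => R i.1)) (R j) F)
    (hB : ¬ ∃ i j : I,
            {k : I | ∃ F : X k → X i, IsIso (R k) (R i) F}.Infinite ∧
            {k : I | ∃ F : X k → X j, IsIso (R k) (R j) F}.Infinite ∧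
            (∃ F : X i → X j, IsCond (R i) (R j) F) ∧
            ¬ ∃ F : X j → X i, IsCond (R j) (R i) F) :
    Reversible (unionRel R) := by
  classical
  intro F hF
  set g : I → I := fun i => (F ⟨i, Classical.choice (hconn i).1⟩).1 with hgdef
  have hgfst : ∀ (i : I) (x : X i), (F ⟨i, x⟩).1 = g i := by
    intro i x
    have h1 : Relation.EqvGen (R i) x (Classical.choice (hconn i).1) :=
      (hconn i).2 x _
    have h2 : Relation.EqvGen (unionRel R) ⟨i, x⟩ ⟨i, Classical.choice (hconn i).1⟩ :=
      eqvGen_map (f := fun t : X i => (⟨i, t⟩ : Σ i, X i))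
        (fun u v huv => (unionRel_mk R u v).mpr huv) h1
    have h3 : Relation.EqvGen (unionRel R) (F ⟨i, x⟩) (F ⟨i, _⟩) :=
      eqvGen_map (fun u v huv => hF.2 u v huv) h2
    exact eqvGen_const (fun u v huv => (huv.1 : u.1 = v.1)) h3
  set c : ∀ i, X i → X (g i) := fun i x => cast (congrArg X (hgfst i x)) (F ⟨i, x⟩).2
    with hcdef
  have hc : ∀ (i : I) (x : X i), F ⟨i, x⟩ = ⟨g i, c i x⟩ :=
    fun i x => sigma_eq_of_fst (hgfst i x)
  have hgsurj : Function.Surjective g := by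
    intro j
    obtain ⟨p, hp⟩ := hF.1.2 ⟨j, Classical.choice (hconn j).1⟩
    obtain ⟨i, x⟩ := p
    refine ⟨i, ?_⟩
    rw [← hgfst i x, hp]
  have hchom : ∀ i, IsHom (R i) (R (g i)) (c i) := by
    intro i x y hxy
    have h1 : unionRel R (F ⟨i, x⟩) (F ⟨i, y⟩) :=
      hF.2 _ _ ((unionRel_mk R x y).mpr hxy)
    rw [hc i x, hc i y] at h1
    exact (unionRel_mk R _ _).mp h1
  have hginj : Function.Injective g := by
    by_contra hni
    apply hA
    refine ⟨g, hgsurj, fun hb => hni hb.1, ?_⟩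
    intro j
    refine ⟨fun p => cast (congrArg X p.1.2) (c p.1.1 p.2), ⟨?_, ?_⟩, ?_⟩
    · rintro ⟨⟨iu, hiu⟩, xu⟩ ⟨⟨iv, hiv⟩, xv⟩ h
      simp only at h
      have h1 : F ⟨iu, xu⟩ = F ⟨iv, xv⟩ := by
        rw [hc iu xu, hc iv xv,
          sigma_eq_of_fst (show (⟨g iu, c iu xu⟩ : Σ i, X i).1 = j from hiu),
          sigma_eq_of_fst (show (⟨g iv, c iv xv⟩ : Σ i, X i).1 = j from hiv)]
        exact congrArg (fun z => (⟨j, z⟩ : Σ i, X i)) h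
      have h2 := hF.1.1 h1
      obtain ⟨h3, h4⟩ := Sigma.mk.inj_iff.mp h2
      subst h3
      exact congrArg _ (eq_of_heq h4)
    · intro z
      obtain ⟨p, hp⟩ := hF.1.2 ⟨j, z⟩
      obtain ⟨i, x⟩ := p
      have hij : g i = j := by rw [← hgfst i x, hp]
      refine ⟨⟨⟨i, hij⟩, x⟩, ?_⟩
      simp only
      have h1 : (⟨g i, c i x⟩ : Σ i, X i) = ⟨j, z⟩ := by rw [← hc i x]; exact hp
      exact cast_of_sigma_eq h1 hij
    · rintro ⟨⟨iu, hiu⟩, xu⟩ ⟨⟨iv, hiv⟩, xv⟩ ⟨h, hr⟩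
      simp only at h
      have h0 : iu = iv := congrArg Subtype.val h
      subst h0
      have hr' : R iu xu xv := hr
      subst hiu
      exact hchom iu xu xv hr'
  have hccond : ∀ i, IsCond (R i) (R (g i)) (c i) := by
    intro i
    refine ⟨⟨?_, ?_⟩, hchom i⟩
    · intro x y h
      have h1 : F ⟨i, x⟩ = F ⟨i, y⟩ := by
        rw [hc i x, hc i y, h]
      have h2 := hF.1.1 h1
      exact eq_of_heq (Sigma.mk.inj_iff.mp h2).2
    · intro z
      obtain ⟨p, hp⟩ := hF.1.2 ⟨g i, z⟩
      obtain ⟨i', x⟩ := p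
      have hij : g i' = g i := by rw [← hgfst i' x, hp]
      have h0 : i' = i := hginj hij
      subst h0
      refine ⟨x, ?_⟩
      have h1 : (⟨g i', c i' x⟩ : Σ i, X i) = ⟨g i', z⟩ := by rw [← hc i' x]; exact hp
      exact eq_of_heq (Sigma.mk.inj_iff.mp h1).2
  refine ⟨hF.1, fun p q => ⟨fun h => hF.2 p q h, fun h => ?_⟩⟩
  obtain ⟨i1, x⟩ := p
  obtain ⟨i2, y⟩ := q
  have hfst : g i1 = g i2 := by
    have := h.1
    rwa [hc i1 x, hc i2 y] at this
  have h0 : i1 = i2 := hginj hfst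
  subst h0
  refine (unionRel_mk R x y).mpr ?_
  by_contra hnr
  have hr' : R (g i1) (c i1 x) (c i1 y) := by
    have h1 := h
    rw [hc i1 x, hc i1 y] at h1
    exact (unionRel_mk R _ _).mp h1
  have hniso : ¬ IsIso (R i1) (R (g i1)) (c i1) := fun hiso => hnr ((hiso.2 x y).mpr hr')
  haveI := hfin i1
  haveI := hfin (g i1)
  have hlt := edges_lt_of_cond_not_iso (hccond i1) hniso
  exact hB (orbit_aux R hfin g ⟨hginj, hgsurj⟩ (fun i => ⟨c i, hccond i⟩) i1 hlt)

/-- **Theorem (Statement 4).** Let `⟨X i, R i⟩`, `i ∈ I`, be pairwise disjoint (realized by a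
sigma type), connected and finite binary structures. Then the disjoint union is reversible iff
`⟨X i : i ∈ I⟩` is a reversible sequence of structures and there are no `i, j ∈ I` such that
the isomorphism classes `{k : X k ≅ X i}` and `{k : X k ≅ X j}` are both infinite and
`X i ≺_c X j` (there is a condensation `X i → X j` but none `X j → X i`). -/
theorem stmt4 {I : Type u} {X : I → Type v} (R : ∀ i, X i → X i → Prop)
    (hconn : ∀ i, Connected (R i)) (hfin : ∀ i, Finite (X i)) :
    Reversible (unionRel R) ↔
      ((¬ ∃ f : I → I, Function.Surjective f ∧ ¬ Function.Bijective f ∧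
          ∀ j : I, ∃ F : (Σ i : {i : I // f i = j}, X i.1) → X j,
            IsCond (unionRel (fun i : {i : I // f i = j} => R i.1)) (R j) F) ∧
        ¬ ∃ i j : I,
            {k : I | ∃ F : X k → X i, IsIso (R k) (R i) F}.Infinite ∧
            {k : I | ∃ F : X k → X j, IsIso (R k) (R j) F}.Infinite ∧
            (∃ F : X i → X j, IsCond (R i) (R j) F) ∧
            ¬ ∃ F : X j → X i, IsCond (R j) (R i) F) := by
  constructor
  · intro hrev
    exact ⟨rev_to_a R hconn hrev, rev_to_b R hrev⟩
  · rintro ⟨hA, hB⟩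
    exact rev_of R hconn hfin hA hB
end
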